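/- arXiv:1807.10890 — 3 statements merged into one kernel-verified Lean document; each statement's English description precedes it below -/
import Mathlib

section
/- Let $G \subset \mathrm{GL}_n(\mathbb{C})$ be a subgroup acting on (i.e., preserving) a 1-dimensional subspace $W \subset \mathbb{C}^n$. Let $g \in \mathrm{GL}_n(\mathbb{C})$ normalize $G$ with $gW \ne W$, and suppose $g$ is diagonalizable with exactly two eigenvalues $\alpha_1, \alpha_2$ satisfying $\alpha_1 \ne \pm\alpha_2$. Then every element of $G$ acts on the 2-dimensional subspace $W \oplus gW$ as a scalar multiplication. -/
/-!
Since `g` normalizes `G`, every `h ∈ G` preserves the lines `W`, `gW` and `g²W`, so for a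
generator `w` of `W` it scales `w`, `gw` and `g²w` by some `a`, `b`, `c`. Diagonalizability gives
`g² = (α₁ + α₂) g - α₁ α₂`, where `α₁ + α₂ ≠ 0` and `α₁ α₂ ≠ 0` (`g` is invertible). Applying `h`
to `g²w = (α₁ + α₂) gw - α₁ α₂ w` and comparing coefficients in the basis `w, gw` of `W ⊕ gW`
gives `b = c = a`.
-/

open Matrix

namespace Representation

variable {K V Γ : Type*} [CommSemiring K] [AddCommMonoid V] [Module K V] [Group Γ]
  (ρ : Representation K Γ V)

theorem map_map_eq_of_mem_normalizer {G : Subgroup Γ} {W : Submodule K V}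
    (hGW : ∀ h ∈ G, W.map (ρ h) = W) {k : Γ} (hk : k ∈ Subgroup.normalizer (G : Set Γ))
    {h : Γ} (hh : h ∈ G) : (W.map (ρ k)).map (ρ h) = W.map (ρ k) := by
  have hconj : k⁻¹ * h * k ∈ G := (Subgroup.mem_normalizer_iff''.mp hk h).mp hh
  rw [← Submodule.map_comp, ← Module.End.mul_eq_comp, ← map_mul,
    show h * k = k * (k⁻¹ * h * k) by group, map_mul, Module.End.mul_eq_comp,
    Submodule.map_comp, hGW _ hconj]

theorem exists_apply_eq_smul_of_mem_normalizer {G : Subgroup Γ} {w : V}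
    (hGw : ∀ h ∈ G, (K ∙ w).map (ρ h) = K ∙ w) {k : Γ}
    (hk : k ∈ Subgroup.normalizer (G : Set Γ)) {h : Γ} (hh : h ∈ G) :
    ∃ c : K, ρ h (ρ k w) = c • ρ k w := by
  have hmem : ρ h (ρ k w) ∈ (K ∙ w).map (ρ k) := by
    rw [← ρ.map_map_eq_of_mem_normalizer hGw hk hh]
    exact Submodule.mem_map_of_mem
      (Submodule.mem_map_of_mem (Submodule.mem_span_singleton_self w))
  rw [Submodule.map_span, Set.image_singleton, Submodule.mem_span_singleton] at hmem
  obtain ⟨c, hc⟩ := hmem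
  exact ⟨c, hc.symm⟩

end Representation

namespace Module.End

variable {K V : Type*} [Field K] [AddCommGroup V] [Module K V]

theorem linearIndependent_pair_of_map_span_singleton_ne {T : Module.End K V}
    (hT : Function.Injective T) {w : V} (hTw : (K ∙ w).map T ≠ K ∙ w) :
    LinearIndependent K ![w, T w] := by
  have hw0 : w ≠ 0 := by
    rintro rfl
    simp at hTw
  rw [LinearIndependent.pair_iff' hw0]
  intro a ha
  have ha0 : a ≠ 0 := by
    rintro rfl
    exact hw0 (hT (by rw [← ha, zero_smul, map_zero]))
  apply hTw
  rw [Submodule.map_span, Set.image_singleton, ← ha,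
    Submodule.span_singleton_smul_eq (isUnit_iff_ne_zero.mpr ha0)]

theorem eq_of_apply_eq_smul_of_apply_apply_eq {T f : Module.End K V}
    (hT : Function.Injective T) {w : V} (hind : LinearIndependent K ![w, T w]) {s p : K}
    (hTw : T (T w) = s • T w - p • w) (hs : s ≠ 0) {a b c : K} (ha : f w = a • w)
    (hb : f (T w) = b • T w) (hc : f (T (T w)) = c • T (T w)) : a = b := by
  have hp : p ≠ 0 := by
    rintro rfl
    rw [zero_smul, sub_zero, ← map_smul] at hTw
    have := LinearIndependent.pair_iff.mp hind s (-1) (by rw [hT hTw]; module)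
    exact one_ne_zero (neg_eq_zero.mp this.2)
  have hf : f (T (T w)) = (s * b) • T w - (p * a) • w := by
    rw [hTw, map_sub, map_smul, map_smul, ha, hb, smul_smul, smul_smul]
  rw [hc, hTw] at hf
  obtain ⟨hca, hbc⟩ := LinearIndependent.pair_iff.mp hind (p * (a - c)) (s * (c - b))
    (by linear_combination (norm := module) hf)
  have := sub_eq_zero.mp ((mul_eq_zero.mp hca).resolve_left hp)
  have := sub_eq_zero.mp ((mul_eq_zero.mp hbc).resolve_left hs)
  grind

end Module.End

theorem Matrix.mul_self_conj_diagonal {n R : Type*} [Fintype n] [DecidableEq n] [CommRing R]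
    (P : GL n R) {d : n → R} {α₁ α₂ : R} (hd : ∀ i, d i = α₁ ∨ d i = α₂) :
    (P * diagonal d * P⁻¹ : Matrix n n R) * (P * diagonal d * P⁻¹ : Matrix n n R) =
      (α₁ + α₂) • (P * diagonal d * P⁻¹ : Matrix n n R) - (α₁ * α₂) • 1 := by
  have hD : diagonal d * diagonal d =
      (α₁ + α₂) • diagonal d - (α₁ * α₂) • (1 : Matrix n n R) := by
    rw [diagonal_mul_diagonal, smul_one_eq_diagonal, ← diagonal_smul, diagonal_sub]
    congr 1
    funext i
    rcases hd i with h | h <;> simp only [Pi.smul_apply, h, smul_eq_mul] <;> ring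
  calc (P * diagonal d * P⁻¹ : Matrix n n R) * (P * diagonal d * P⁻¹ : Matrix n n R)
      = P * (diagonal d * diagonal d) * P⁻¹ := by
        simp only [Matrix.mul_assoc, Units.inv_mul_cancel_left]
    _ = _ := by
        simp only [hD, Matrix.mul_sub, Matrix.sub_mul, Matrix.mul_smul, Matrix.smul_mul,
          Matrix.mul_one, Units.mul_inv]

theorem stmt0_general (n : ℕ) (G : Subgroup (GL (Fin n) ℂ))
    (W : Submodule ℂ (Fin n → ℂ)) (hW1 : Module.finrank ℂ W = 1)
    (hGW : ∀ h ∈ G, W.map (Matrix.toLin' (h : Matrix (Fin n) (Fin n) ℂ)) = W)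
    (g : GL (Fin n) ℂ) (hnorm : g ∈ Subgroup.normalizer (G : Set (GL (Fin n) ℂ)))
    (hgW : W.map (Matrix.toLin' (g : Matrix (Fin n) (Fin n) ℂ)) ≠ W)
    (α₁ α₂ : ℂ) (hne' : α₁ ≠ -α₂)
    (hdiag : ∃ (P : GL (Fin n) ℂ) (d : Fin n → ℂ),
      (∀ i, d i = α₁ ∨ d i = α₂) ∧ (∃ i, d i = α₁) ∧ (∃ i, d i = α₂) ∧
      (g : Matrix (Fin n) (Fin n) ℂ)
        = (P : Matrix (Fin n) (Fin n) ℂ) * Matrix.diagonal d * (P⁻¹ : GL (Fin n) ℂ)) :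
    ∀ h ∈ G, ∃ c : ℂ, ∀ w ∈ W ⊔ W.map (Matrix.toLin' (g : Matrix (Fin n) (Fin n) ℂ)),
      Matrix.toLin' (h : Matrix (Fin n) (Fin n) ℂ) w = c • w := by
  intro h hh
  -- `ρ k` unfolds to `toLin' ↑k`, which lets the `change`s below restate everything through `ρ`.
  let ρ : Representation ℂ (GL (Fin n) ℂ) (Fin n → ℂ) :=
    Matrix.toLinAlgEquiv'.toMonoidHom.comp (Units.coeHom _)
  obtain ⟨w, hwW, hw0⟩ := Submodule.exists_mem_ne_zero_of_ne_bot (p := W) <| by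
    rintro rfl
    simp at hW1
  obtain rfl := eq_span_singleton_of_mem_of_finrank_eq_one hW1 hwW hw0
  change ∀ h ∈ G, (ℂ ∙ w).map (ρ h) = ℂ ∙ w at hGW
  change (ℂ ∙ w).map (ρ g) ≠ ℂ ∙ w at hgW
  change ∃ c : ℂ, ∀ x ∈ ℂ ∙ w ⊔ (ℂ ∙ w).map (ρ g), ρ h x = c • x
  obtain ⟨P, d, hd, -, -, hg⟩ := hdiag
  have hgg : ρ g (ρ g w) = (α₁ + α₂) • ρ g w - (α₁ * α₂) • w := by
    change toLin' (g : Matrix (Fin n) (Fin n) ℂ) (toLin' (g : Matrix (Fin n) (Fin n) ℂ) w) =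
      (α₁ + α₂) • toLin' (g : Matrix (Fin n) (Fin n) ℂ) w - (α₁ * α₂) • w
    rw [← Matrix.toLin'_mul_apply, hg, Matrix.mul_self_conj_diagonal P hd, map_sub, map_smul,
      map_smul, toLin'_one]
    rfl
  have hg_inj := (ρ.apply_bijective g).injective
  have hind := Module.End.linearIndependent_pair_of_map_span_singleton_ne hg_inj hgW
  obtain ⟨a, ha⟩ := ρ.exists_apply_eq_smul_of_mem_normalizer hGW (one_mem _) hh
  obtain ⟨b, hb⟩ := ρ.exists_apply_eq_smul_of_mem_normalizer hGW hnorm hh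
  obtain ⟨c, hc⟩ := ρ.exists_apply_eq_smul_of_mem_normalizer hGW (mul_mem hnorm hnorm) hh
  rw [map_one, Module.End.one_apply] at ha
  rw [map_mul, Module.End.mul_apply] at hc
  have hab := Module.End.eq_of_apply_eq_smul_of_apply_apply_eq hg_inj hind hgg
    (fun hs => hne' (eq_neg_of_add_eq_zero_left hs)) ha hb hc
  have hle : ℂ ∙ w ⊔ ℂ ∙ ρ g w ≤ Module.End.eigenspace (ρ h) a := by
    simp only [sup_le_iff, Submodule.span_singleton_le_iff_mem, Module.End.mem_eigenspace_iff]
    exact ⟨ha, hab ▸ hb⟩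
  rw [Submodule.map_span, Set.image_singleton]
  exact ⟨a, fun x hx => Module.End.mem_eigenspace_iff.mp (hle hx)⟩

/-- If a subgroup `G ⊆ GL n ℂ` preserves a line `W`, and `g ∈ GL n ℂ`
normalizes `G`, moves `W`, and is diagonalizable with exactly two eigenvalues
`α₁ ≠ ±α₂`, then every element of `G` acts on `W ⊔ gW` as a scalar. -/
theorem stmt0 (n : ℕ) (G : Subgroup (GL (Fin n) ℂ))
    (W : Submodule ℂ (Fin n → ℂ)) (hW1 : Module.finrank ℂ W = 1)
    (hGW : ∀ h ∈ G, W.map (Matrix.toLin' (h : Matrix (Fin n) (Fin n) ℂ)) = W)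
    (g : GL (Fin n) ℂ) (hnorm : g ∈ Subgroup.normalizer (G : Set (GL (Fin n) ℂ)))
    (hgW : W.map (Matrix.toLin' (g : Matrix (Fin n) (Fin n) ℂ)) ≠ W)
    (α₁ α₂ : ℂ) (hne : α₁ ≠ α₂) (hne' : α₁ ≠ -α₂)
    (hdiag : ∃ (P : GL (Fin n) ℂ) (d : Fin n → ℂ),
      (∀ i, d i = α₁ ∨ d i = α₂) ∧ (∃ i, d i = α₁) ∧ (∃ i, d i = α₂) ∧
      (g : Matrix (Fin n) (Fin n) ℂ)
        = (P : Matrix (Fin n) (Fin n) ℂ) * Matrix.diagonal d * (P⁻¹ : GL (Fin n) ℂ)) :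
    ∀ h ∈ G, ∃ c : ℂ, ∀ w ∈ W ⊔ W.map (Matrix.toLin' (g : Matrix (Fin n) (Fin n) ℂ)),
      Matrix.toLin' (h : Matrix (Fin n) (Fin n) ℂ) w = c • w :=
  stmt0_general n G W hW1 hGW g hnorm hgW α₁ α₂ hne' hdiag
end

section
/- Let $G \subset \mathrm{GL}_n(\mathbb{C})$ be a subgroup preserving a 1-dimensional subspace $W \subset \mathbb{C}^n$. Let $g \in \mathrm{GL}_n(\mathbb{C})$ normalize $G$ with $gW \ne W$, and suppose $g$ is unipotent with $(g - I)^2 = 0$. Then every element of $G$ acts on $W \oplus gW$ as a scalar multiplication. -/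
/-!
Let `h ∈ G` and let `w` span `W`. Conjugating `h` by `g⁻¹` and by `g` stays in `G`, so besides `w`
the vectors `g w` and `g⁻¹ w` are eigenvectors of `h` as well. Since `(g - 1)² = 0` we have
`g⁻¹ = 2 - g`, i.e. `g⁻¹ w = 2 w - g w`, while `w` and `g w` are independent because `g W ≠ W`.
An eigenvector that is a combination of two independent eigenvectors with nonzero coefficients
forces their eigenvalues to agree, so `h` acts on `w` and `g w` by the same scalar.
-/

open Matrix

open Module Submodule

theorem Units.val_inv_eq_two_sub_of_sq_sub_one_eq_zero {R : Type*} [Ring R] (u : Rˣ)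
    (hu : ((u : R) - 1) ^ 2 = 0) : ((u⁻¹ : Rˣ) : R) = 2 - u :=
  Units.inv_eq_of_mul_eq_one_right <| by
    rw [show (u : R) * (2 - u) = 1 - (u - 1) ^ 2 by noncomm_ring, hu, sub_zero]

variable {K V : Type*} [Field K] [AddCommGroup V] [Module K V]

namespace Module.End

theorem eq_of_linearIndependent_of_apply_eq_smul {f : End K V} {x y : V}
    (hxy : LinearIndependent K ![x, y]) {a b d s t : K} (hs : s ≠ 0) (ht : t ≠ 0)
    (hx : f x = a • x) (hy : f y = b • y) (hz : f (s • x + t • y) = d • (s • x + t • y)) :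
    a = b := by
  rw [map_add, map_smul, map_smul, hx, hy] at hz
  obtain ⟨hsa, htb⟩ := LinearIndependent.pair_iff.mp hxy (s * (a - d)) (t * (b - d))
    (by rw [← sub_eq_zero] at hz; rw [← hz]; module)
  rw [mul_eq_zero, sub_eq_zero] at hsa htb
  rw [hsa.resolve_left hs, htb.resolve_left ht]

theorem apply_units_eq_smul_of_conj {u : (End K V)ˣ} {f : End K V} {x : V} {c : K}
    (h : (↑u⁻¹ * f * ↑u : End K V) x = c • x) :
    f ((u : End K V) x) = c • (u : End K V) x := by
  have := congrArg (u : End K V) h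
  rwa [mul_apply, mul_apply, ← mul_apply (u : End K V), Units.mul_inv, one_apply, map_smul]
    at this

end Module.End

theorem LinearIndependent.pair_apply_of_map_span_singleton_ne {g : End K V} {w : V}
    (hg : Function.Injective g) (h : (K ∙ w).map g ≠ K ∙ w) :
    LinearIndependent K ![w, g w] := by
  have hw : w ≠ 0 := by rintro rfl; simp at h
  refine (LinearIndependent.pair_iff' hw).mpr fun a ha => h ?_
  have ha0 : a ≠ 0 := by rintro rfl; exact hw (hg (by simp [← ha]))
  rw [map_span, Set.image_singleton, ← ha, span_singleton_smul_eq (IsUnit.mk0 a ha0)]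

theorem LinearMap.GeneralLinearGroup.exists_le_eigenspace_sup_map_of_mem_normalizer
    (h2 : (2 : K) ≠ 0) {G : Subgroup (GeneralLinearGroup K V)} {w : V}
    (hGw : ∀ h ∈ G, (K ∙ w).map (h : End K V) = K ∙ w) {g : GeneralLinearGroup K V}
    (hg : g ∈ Subgroup.normalizer (G : Set (GeneralLinearGroup K V)))
    (hgw : (K ∙ w).map (g : End K V) ≠ K ∙ w) (hunip : ((g : End K V) - 1) ^ 2 = 0)
    {h : GeneralLinearGroup K V} (hh : h ∈ G) :
    ∃ c, (K ∙ w) ⊔ (K ∙ w).map (g : End K V) ≤ End.eigenspace (h : End K V) c := by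
  have eigen : ∀ k ∈ G, ∃ c : K, (k : End K V) w = c • w := fun k hk => by
    obtain ⟨c, hc⟩ := mem_span_singleton.mp
      (hGw k hk ▸ mem_map_of_mem (mem_span_singleton_self w) : (k : End K V) w ∈ K ∙ w)
    exact ⟨c, hc.symm⟩
  obtain ⟨c, hc⟩ := eigen h hh
  obtain ⟨c₁, hc₁⟩ := eigen _ ((Subgroup.mem_normalizer_iff''.mp hg h).mp hh)
  obtain ⟨c₂, hc₂⟩ := eigen _ ((Subgroup.mem_normalizer_iff.mp hg h).mp hh)
  have hgw' : (h : End K V) ((g : End K V) w) = c₁ • (g : End K V) w :=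
    End.apply_units_eq_smul_of_conj hc₁
  have hginvw : (h : End K V) ((2 : K) • w + (-1 : K) • (g : End K V) w) =
      c₂ • ((2 : K) • w + (-1 : K) • (g : End K V) w) := by
    have := End.apply_units_eq_smul_of_conj (u := g⁻¹) (by simpa using hc₂)
    rw [Units.val_inv_eq_two_sub_of_sq_sub_one_eq_zero _ hunip, sub_apply, End.ofNat_apply]
      at this
    convert this using 2 <;> module
  have hcc₁ : c = c₁ := End.eq_of_linearIndependent_of_apply_eq_smul
    (.pair_apply_of_map_span_singleton_ne g.toLinearEquiv.injective hgw) h2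
    (neg_ne_zero.mpr one_ne_zero) hc hgw' hginvw
  refine ⟨c, sup_le ?_ ?_⟩
  · rw [span_singleton_le_iff_mem, End.mem_eigenspace_iff]
    exact hc
  · rw [map_span, Set.image_singleton, span_singleton_le_iff_mem, End.mem_eigenspace_iff, hcc₁]
    exact hgw'

/-- If a subgroup `G ⊆ GL n ℂ` preserves a line `W`, and `g ∈ GL n ℂ`
normalizes `G`, moves `W`, and is unipotent with `(g - I)^2 = 0`, then every element
of `G` acts on `W ⊔ gW` as a scalar. -/
theorem stmt1 (n : ℕ) (G : Subgroup (GL (Fin n) ℂ))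
    (W : Submodule ℂ (Fin n → ℂ)) (hW1 : Module.finrank ℂ W = 1)
    (hGW : ∀ h ∈ G, W.map (Matrix.toLin' (h : Matrix (Fin n) (Fin n) ℂ)) = W)
    (g : GL (Fin n) ℂ) (hnorm : g ∈ Subgroup.normalizer (G : Set (GL (Fin n) ℂ)))
    (hgW : W.map (Matrix.toLin' (g : Matrix (Fin n) (Fin n) ℂ)) ≠ W)
    (hunip : ((g : Matrix (Fin n) (Fin n) ℂ) - 1) ^ 2 = 0) :
    ∀ h ∈ G, ∃ c : ℂ, ∀ w ∈ W ⊔ W.map (Matrix.toLin' (g : Matrix (Fin n) (Fin n) ℂ)),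
      Matrix.toLin' (h : Matrix (Fin n) (Fin n) ℂ) w = c • w := by
  intro h hh
  obtain ⟨w, hwW, hw0⟩ := W.exists_mem_ne_zero_of_ne_bot (by rintro rfl; simp at hW1)
  obtain rfl := eq_span_singleton_of_mem_of_finrank_eq_one hW1 hwW hw0
  let e : GL (Fin n) ℂ ≃* LinearMap.GeneralLinearGroup ℂ (Fin n → ℂ) :=
    Matrix.GeneralLinearGroup.toLin
  have he (k : GL (Fin n) ℂ) : (e k : End ℂ (Fin n → ℂ)) = Matrix.toLin' (k : Matrix _ _ ℂ) :=
    Matrix.GeneralLinearGroup.coe_toLin k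
  obtain ⟨c, hc⟩ := LinearMap.GeneralLinearGroup.exists_le_eigenspace_sup_map_of_mem_normalizer
    (w := w) (g := e g) (h := e h) (G := G.map e.toMonoidHom) two_ne_zero
    (by rintro _ ⟨k, hk, rfl⟩; rw [MulEquiv.coe_toMonoidHom, he]; exact hGW k hk)
    (by rw [← Subgroup.map_equiv_normalizer_eq]; exact Subgroup.mem_map_of_mem _ hnorm)
    (by rwa [he])
    (by simpa [he, End.one_eq_id] using congrArg Matrix.toLin' hunip)
    (Subgroup.mem_map_of_mem _ hh)
  rw [he, he] at hc
  exact ⟨c, fun x hx => End.mem_eigenspace_iff.mp (hc hx)⟩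
end

section
/- The series $F_C(a,b,c;x) = \sum_{m_1,\dots,m_n \ge 0} \frac{(a)_{m_1+\cdots+m_n} (b)_{m_1+\cdots+m_n}}{(c_1)_{m_1} \cdots (c_n)_{m_n}\, m_1! \cdots m_n!} x_1^{m_1} \cdots x_n^{m_n}$ converges absolutely for all $x \in \mathbb{C}^n$ with $\sum_{k=1}^n \sqrt{|x_k|} < 1$, where $c_1,\dots,c_n \notin \{0,-1,-2,\dots\}$. -/
/-!
Put `M = m₁ + ⋯ + mₙ` and `t_k = √‖x_k‖`. Each factor of `(a)_M` has norm at most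
`⌈‖a‖⌉ + 1 + j`, so `‖(a)_M‖ ≤ M! (M + 1)^⌈‖a‖⌉`; and since no `c_k` is a non-positive integer,
`m! ≤ E (m + 1)^L ‖(c_k)_m‖`. Hence the `m`-th term is bounded by a polynomial in `M` times
`(M! / (m₁! ⋯ mₙ!))² ∏ ‖x_k‖^{m_k} = (multinomial(m) ∏ t_k^{m_k})²`, and by the multinomial theorem
these squares sum over `|m| = M` to at most `(∑ t_k)^{2M}`, a geometric rate.
-/

open Finset
open scoped Nat

theorem ascPochhammer_eval_eq_prod_range {S : Type*} [CommSemiring S] (n : ℕ) (z : S) :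
    (ascPochhammer S n).eval z = ∏ j ∈ range n, (z + j) := by
  induction n with
  | zero => simp
  | succ n ih => rw [ascPochhammer_succ_eval, ih, prod_range_succ]

theorem ascPochhammer_eval_mul_eval_add {S : Type*} [CommSemiring S] (n m : ℕ) (z : S) :
    (ascPochhammer S n).eval z * (ascPochhammer S m).eval (z + n) =
      (ascPochhammer S (n + m)).eval z := by
  rw [← ascPochhammer_mul, Polynomial.eval_mul, Polynomial.eval_comp, Polynomial.eval_add,
    Polynomial.eval_X, Polynomial.eval_natCast]

theorem ascPochhammer_eval_ne_zero {R : Type*} [CommRing R] [IsDomain R] {c : R}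
    (hc : ∀ m : ℕ, c ≠ -m) (n : ℕ) : (ascPochhammer R n).eval c ≠ 0 := by
  rw [Ne, ascPochhammer_eval_eq_zero_iff]
  rintro ⟨m, -, hm⟩
  exact hc m (by rw [hm, neg_neg])

theorem Nat.succ_ascFactorial_le_factorial_mul_pow (A M : ℕ) :
    (A + 1).ascFactorial M ≤ M ! * (M + 1) ^ A := by
  rw [Nat.ascFactorial_eq_factorial_mul_choose, ← Nat.choose_symm_add, add_comm]
  exact Nat.mul_le_mul_left _ (Nat.choose_add_le_add_one_pow M A)

section Norm

variable {R : Type*} [NormedCommRing R] [NormOneClass R]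

theorem norm_ascPochhammer_eval_le_prod (n : ℕ) (z : R) :
    ‖(ascPochhammer R n).eval z‖ ≤ ∏ j ∈ range n, (‖z‖ + j) := by
  rw [ascPochhammer_eval_eq_prod_range]
  refine (Finset.norm_prod_le _ _).trans (prod_le_prod (fun _ _ => norm_nonneg _) fun j _ => ?_)
  exact (norm_add_le _ _).trans (by simpa using Nat.norm_cast_le (α := R) j)

theorem norm_ascPochhammer_eval_le_pow (n : ℕ) (z : R) :
    ‖(ascPochhammer R n).eval z‖ ≤ (‖z‖ + n) ^ n := by
  refine (norm_ascPochhammer_eval_le_prod n z).trans ?_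
  simpa using prod_le_prod (s := range n) (fun j _ => by positivity)
    fun j hj => add_le_add_right (Nat.cast_le.2 (mem_range.1 hj).le) ‖z‖

theorem norm_ascPochhammer_eval_le_factorial_mul_pow (M : ℕ) (z : R) :
    ‖(ascPochhammer R M).eval z‖ ≤ M ! * (M + 1 : ℝ) ^ ⌈‖z‖⌉₊ := by
  calc ‖(ascPochhammer R M).eval z‖ ≤ ∏ j ∈ range M, (‖z‖ + j) :=
        norm_ascPochhammer_eval_le_prod M z
    _ ≤ ∏ j ∈ range M, ((⌈‖z‖⌉₊ + 1 : ℕ) + j : ℝ) := by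
      gcongr with j
      push_cast
      linarith [Nat.le_ceil ‖z‖]
    _ = (⌈‖z‖⌉₊ + 1).ascFactorial M := by push_cast [Nat.ascFactorial_eq_prod_range]; rfl
    _ ≤ M ! * (M + 1 : ℝ) ^ ⌈‖z‖⌉₊ := by
      exact_mod_cast Nat.succ_ascFactorial_le_factorial_mul_pow _ _

end Norm

theorem factorial_le_norm_ascPochhammer_eval_add (c : ℂ) {L : ℕ} (hL : ‖c‖ + 1 ≤ L) (m : ℕ) :
    (m ! : ℝ) ≤ ‖(ascPochhammer ℂ m).eval (c + L)‖ := by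
  rw [ascPochhammer_eval_eq_prod_range, norm_prod, ← prod_range_add_one_eq_factorial]
  push_cast
  gcongr with j
  calc (j : ℝ) + 1 ≤ ‖((L + j : ℕ) : ℂ)‖ - ‖-c‖ := by
        rw [Complex.norm_natCast, norm_neg]; push_cast; linarith
    _ ≤ ‖((L + j : ℕ) : ℂ) - -c‖ := norm_sub_norm_le _ _
    _ = ‖c + L + j‖ := by push_cast; ring_nf

theorem exists_factorial_le_mul_pow_mul_norm_ascPochhammer_eval {c : ℂ}
    (hc : ∀ m : ℕ, c ≠ -m) :
    ∃ E : ℝ, ∃ L : ℕ, ∀ m : ℕ,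
      (m ! : ℝ) ≤ E * (m + 1) ^ L * ‖(ascPochhammer ℂ m).eval c‖ := by
  set L := ⌈‖c‖⌉₊ + 1
  have hL : ‖c‖ + 1 ≤ L := by push_cast [L]; linarith [Nat.le_ceil ‖c‖]
  set δ := ‖(ascPochhammer ℂ L).eval c‖
  have hδ : 0 < δ := norm_pos_iff.2 (ascPochhammer_eval_ne_zero hc L)
  refine ⟨δ⁻¹ * (‖c‖ + L) ^ L, L, fun m => ?_⟩
  -- `(c)_L (c + L)_m = (c)_m (c + m)_L`, where `(c + L)_m` dominates `m!` and `(c + m)_L` is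
  -- polynomial in `m`.
  have hsplit : δ * ‖(ascPochhammer ℂ m).eval (c + L)‖ =
      ‖(ascPochhammer ℂ m).eval c‖ * ‖(ascPochhammer ℂ L).eval (c + m)‖ := by
    rw [← norm_mul, ← norm_mul, ascPochhammer_eval_mul_eval_add,
      ascPochhammer_eval_mul_eval_add, add_comm]
  have hshift : ‖(ascPochhammer ℂ L).eval (c + m)‖ ≤ (‖c‖ + L) ^ L * (m + 1) ^ L := by
    calc ‖(ascPochhammer ℂ L).eval (c + m)‖ ≤ (‖c + m‖ + L) ^ L :=
          norm_ascPochhammer_eval_le_pow L _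
      _ ≤ ((‖c‖ + L) * (m + 1)) ^ L := by
          gcongr
          have := norm_add_le c (m : ℂ)
          rw [Complex.norm_natCast] at this
          nlinarith [norm_nonneg c, (m.cast_nonneg : (0 : ℝ) ≤ m)]
      _ = (‖c‖ + L) ^ L * (m + 1) ^ L := mul_pow _ _ _
  calc (m ! : ℝ) ≤ ‖(ascPochhammer ℂ m).eval (c + L)‖ :=
        factorial_le_norm_ascPochhammer_eval_add c hL m
    _ = δ⁻¹ * (‖(ascPochhammer ℂ m).eval c‖ * ‖(ascPochhammer ℂ L).eval (c + m)‖) := by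
        rw [← hsplit, inv_mul_cancel_left₀ hδ.ne']
    _ ≤ δ⁻¹ * (‖(ascPochhammer ℂ m).eval c‖ * ((‖c‖ + L) ^ L * (m + 1) ^ L)) := by gcongr
    _ = δ⁻¹ * (‖c‖ + L) ^ L * (m + 1) ^ L * ‖(ascPochhammer ℂ m).eval c‖ := by ring

theorem exists_prod_factorial_le_mul_pow_mul_prod_norm_ascPochhammer_eval {ι : Type*} [Fintype ι]
    {c : ι → ℂ} (hc : ∀ k, ∀ m : ℕ, c k ≠ -m) :
    ∃ E : ℝ, ∃ L : ℕ, ∀ m : ι → ℕ, ∏ k, ((m k)! : ℝ) ≤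
      E * ((∑ k, m k : ℕ) + 1 : ℝ) ^ L * ∏ k, ‖(ascPochhammer ℂ (m k)).eval (c k)‖ := by
  choose E L hE using fun k => exists_factorial_le_mul_pow_mul_norm_ascPochhammer_eval (hc k)
  have hE0 : ∀ k, 0 ≤ E k := fun k => zero_le_one.trans (by simpa using hE k 0)
  refine ⟨∏ k, E k, ∑ k, L k, fun m => ?_⟩
  calc ∏ k, ((m k)! : ℝ)
      ≤ ∏ k, (E k * (m k + 1 : ℝ) ^ L k * ‖(ascPochhammer ℂ (m k)).eval (c k)‖) :=
        prod_le_prod (fun _ _ => by positivity) fun k _ => hE k (m k)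
    _ = (∏ k, E k) * (∏ k, (m k + 1 : ℝ) ^ L k) *
          ∏ k, ‖(ascPochhammer ℂ (m k)).eval (c k)‖ := by
        rw [prod_mul_distrib, prod_mul_distrib]
    _ ≤ (∏ k, E k) * (∏ k, ((∑ k, m k : ℕ) + 1 : ℝ) ^ L k) *
          ∏ k, ‖(ascPochhammer ℂ (m k)).eval (c k)‖ := by
        have := prod_nonneg fun k (_ : k ∈ univ) => hE0 k
        gcongr with k
        exact_mod_cast single_le_sum (fun _ _ => Nat.zero_le _) (mem_univ k)
    _ = _ := by rw [prod_pow_eq_pow_sum]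

theorem sum_piAntidiag_sq_multinomial_mul_prod_pow_le {ι : Type*} [DecidableEq ι]
    (s : Finset ι) {t : ι → ℝ} (ht : ∀ i ∈ s, 0 ≤ t i) (M : ℕ) :
    ∑ m ∈ s.piAntidiag M, ((Nat.multinomial s m : ℝ) * ∏ i ∈ s, t i ^ m i) ^ 2 ≤
      (∑ i ∈ s, t i) ^ (2 * M) := by
  set w : (ι → ℕ) → ℝ := fun m => (Nat.multinomial s m : ℝ) * ∏ i ∈ s, t i ^ m i
  have hw : ∀ m, 0 ≤ w m := fun m => mul_nonneg (Nat.cast_nonneg _) (prod_nonneg fun i hi =>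
    pow_nonneg (ht i hi) _)
  have hsum : ∑ m ∈ s.piAntidiag M, w m = (∑ i ∈ s, t i) ^ M :=
    (sum_pow_eq_sum_piAntidiag s t M).symm
  calc ∑ m ∈ s.piAntidiag M, w m ^ 2
      ≤ ∑ m ∈ s.piAntidiag M, (∑ i ∈ s, t i) ^ M * w m := by
        refine sum_le_sum fun m hm => ?_
        rw [sq, ← hsum]
        exact mul_le_mul_of_nonneg_right (single_le_sum (fun m _ => hw m) hm) (hw m)
    _ = (∑ i ∈ s, t i) ^ (2 * M) := by rw [← mul_sum, hsum, two_mul, pow_add]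

theorem summable_of_sum_fiber_le {α β : Type*} [DecidableEq β] {f : α → ℝ} {g : β → ℝ}
    (deg : α → β) (fiber : β → Finset α) (hfiber : ∀ a, a ∈ fiber (deg a)) (hf : 0 ≤ f)
    (hg : Summable g) (h : ∀ b, ∑ a ∈ fiber b, f a ≤ g b) : Summable f := by
  have hg0 : ∀ b, 0 ≤ g b := fun b => (sum_nonneg fun a _ => hf a).trans (h b)
  refine summable_of_sum_le (c := ∑' b, g b) hf fun u => ?_
  calc ∑ a ∈ u, f a = ∑ b ∈ u.image deg, ∑ a ∈ u with deg a = b, f a :=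
        (sum_fiberwise_of_maps_to (fun a ha => mem_image_of_mem deg ha) f).symm
    _ ≤ ∑ b ∈ u.image deg, g b := by
        refine sum_le_sum fun b _ => le_trans (sum_le_sum_of_subset_of_nonneg ?_
          fun a _ _ => hf a) (h b)
        intro a ha
        rw [← (mem_filter.1 ha).2]
        exact hfiber a
    _ ≤ ∑' b, g b := hg.sum_le_tsum _ fun b _ => hg0 b

theorem summable_add_one_pow_mul_geometric {r : ℝ} (K : ℕ) (hr0 : 0 ≤ r) (hr1 : r < 1) :
    Summable fun M : ℕ => ((M : ℝ) + 1) ^ K * r ^ M := by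
  refine (summable_descFactorial_mul_geometric_of_norm_lt_one K
    (by rwa [Real.norm_of_nonneg hr0])).of_nonneg_of_le (fun M => by positivity) fun M => ?_
  gcongr
  have := Nat.pow_sub_le_descFactorial (M + K) K
  rw [Nat.add_right_comm, Nat.add_sub_cancel] at this
  exact_mod_cast this

section LauricellaFC

variable {ι : Type*} [Fintype ι]

noncomputable def lauricellaFCCoeff (a b : ℂ) (c : ι → ℂ) (m : ι → ℕ) : ℂ :=
  (ascPochhammer ℂ (∑ k, m k)).eval a * (ascPochhammer ℂ (∑ k, m k)).eval b /
    ((∏ k, (ascPochhammer ℂ (m k)).eval (c k)) * ∏ k, ((m k)! : ℂ))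

theorem exists_norm_lauricellaFCCoeff_le (a b : ℂ) {c : ι → ℂ} (hc : ∀ k, ∀ m : ℕ, c k ≠ -m) :
    ∃ C : ℝ, ∃ K : ℕ, ∀ m : ι → ℕ, ‖lauricellaFCCoeff a b c m‖ ≤
      C * ((∑ k, m k : ℕ) + 1 : ℝ) ^ K * (Nat.multinomial univ m : ℝ) ^ 2 := by
  obtain ⟨E, L, hE⟩ := exists_prod_factorial_le_mul_pow_mul_prod_norm_ascPochhammer_eval hc
  refine ⟨E, ⌈‖a‖⌉₊ + ⌈‖b‖⌉₊ + L, fun m => ?_⟩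
  set M := ∑ k, m k
  set P := ∏ k, ‖(ascPochhammer ℂ (m k)).eval (c k)‖
  set F := ∏ k, ((m k)! : ℝ)
  have hP : 0 < P := prod_pos fun k _ => norm_pos_iff.2 (ascPochhammer_eval_ne_zero (hc k) _)
  have hF : 0 < F := prod_pos fun k _ => by positivity
  have hM : (M ! : ℝ) = Nat.multinomial univ m * F := by
    rw [← Nat.multinomial_spec univ m]; push_cast; ring
  have hnorm : ‖lauricellaFCCoeff a b c m‖ =
      ‖(ascPochhammer ℂ M).eval a‖ * ‖(ascPochhammer ℂ M).eval b‖ / (P * F) := by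
    simp [lauricellaFCCoeff, M, P, F, norm_prod]
  rw [hnorm, div_le_iff₀ (mul_pos hP hF)]
  calc ‖(ascPochhammer ℂ M).eval a‖ * ‖(ascPochhammer ℂ M).eval b‖
      ≤ (M ! * (M + 1 : ℝ) ^ ⌈‖a‖⌉₊) * (M ! * (M + 1 : ℝ) ^ ⌈‖b‖⌉₊) := by
        gcongr <;> exact norm_ascPochhammer_eval_le_factorial_mul_pow M _
    _ = (M + 1 : ℝ) ^ (⌈‖a‖⌉₊ + ⌈‖b‖⌉₊) * (Nat.multinomial univ m : ℝ) ^ 2 * F * F := by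
        rw [hM]; ring
    _ ≤ (M + 1 : ℝ) ^ (⌈‖a‖⌉₊ + ⌈‖b‖⌉₊) * (Nat.multinomial univ m : ℝ) ^ 2 *
          (E * (M + 1 : ℝ) ^ L * P) * F := by gcongr; exact hE m
    _ = E * (M + 1 : ℝ) ^ (⌈‖a‖⌉₊ + ⌈‖b‖⌉₊ + L) * (Nat.multinomial univ m : ℝ) ^ 2 *
          (P * F) := by ring

theorem summable_of_le_mul_sq_multinomial_mul_prod_pow {f : (ι → ℕ) → ℝ} {t : ι → ℝ}
    (hf : 0 ≤ f) (ht : ∀ k, 0 ≤ t k) (ht1 : ∑ k, t k < 1) (C : ℝ) (K : ℕ)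
    (hfC : ∀ m, f m ≤
      C * ((∑ k, m k : ℕ) + 1 : ℝ) ^ K * ((Nat.multinomial univ m : ℝ) * ∏ k, t k ^ m k) ^ 2) :
    Summable f := by
  classical
  have hC : 0 ≤ C := by simpa [Nat.multinomial] using (hf 0).trans (hfC 0)
  refine summable_of_sum_fiber_le (fun m => ∑ k, m k) (fun M => univ.piAntidiag M)
    (fun m => by simp [mem_piAntidiag]) hf
    ((summable_add_one_pow_mul_geometric K (sq_nonneg _)
      (pow_lt_one₀ (sum_nonneg fun k _ => ht k) ht1 two_ne_zero)).mul_left C) fun M => ?_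
  calc ∑ m ∈ univ.piAntidiag M, f m
      ≤ ∑ m ∈ univ.piAntidiag M,
          C * ((M : ℝ) + 1) ^ K * ((Nat.multinomial univ m : ℝ) * ∏ k, t k ^ m k) ^ 2 :=
        sum_le_sum fun m hm => (mem_piAntidiag.1 hm).1 ▸ hfC m
    _ ≤ C * ((M : ℝ) + 1) ^ K * (∑ k, t k) ^ (2 * M) := by
        rw [← mul_sum]
        gcongr
        exact sum_piAntidiag_sq_multinomial_mul_prod_pow_le univ (fun k _ => ht k) M
    _ = C * (((M : ℝ) + 1) ^ K * ((∑ k, t k) ^ 2) ^ M) := by rw [pow_mul]; ring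

theorem summable_norm_lauricellaFCCoeff_mul_prod_pow (a b : ℂ) {c : ι → ℂ}
    (hc : ∀ k, ∀ m : ℕ, c k ≠ -m) {x : ι → ℂ} (hx : ∑ k, √‖x k‖ < 1) :
    Summable fun m : ι → ℕ => ‖lauricellaFCCoeff a b c m * ∏ k, x k ^ m k‖ := by
  obtain ⟨C, K, hC⟩ := exists_norm_lauricellaFCCoeff_le a b hc
  refine summable_of_le_mul_sq_multinomial_mul_prod_pow (fun m => norm_nonneg _)
    (fun k => Real.sqrt_nonneg _) hx C K fun m => ?_
  have hxt : ∏ k, ‖x k‖ ^ m k = (∏ k, √‖x k‖ ^ m k) ^ 2 := by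
    rw [← prod_pow]
    refine prod_congr rfl fun k _ => ?_
    rw [← pow_mul, mul_comm, pow_mul, Real.sq_sqrt (norm_nonneg _)]
  rw [norm_mul, norm_prod]
  simp only [norm_pow]
  rw [hxt, mul_pow, ← mul_assoc]
  gcongr
  exact hC m

end LauricellaFC

/-- the Lauricella series `F_C(a,b,c;x)` converges absolutely whenever
`∑ √|x_k| < 1` and no `c_k` is a non-positive integer. -/
theorem stmt13 (n : ℕ) (a b : ℂ) (c : Fin n → ℂ)
    (hc : ∀ k, ∀ m : ℕ, c k ≠ -(m : ℂ)) (x : Fin n → ℂ)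
    (hx : (Finset.univ.sum fun k => Real.sqrt ‖x k‖) < 1) :
    Summable (fun m : Fin n → ℕ =>
      ‖(ascPochhammer ℂ (Finset.univ.sum m)).eval a *
          (ascPochhammer ℂ (Finset.univ.sum m)).eval b /
          ((Finset.univ.prod fun k => (ascPochhammer ℂ (m k)).eval (c k)) *
            (Finset.univ.prod fun k => (Nat.factorial (m k) : ℂ))) *
        Finset.univ.prod fun k => x k ^ m k‖) :=
  summable_norm_lauricellaFCCoeff_mul_prod_pow a b hc hx
end
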